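/- arXiv:2508.05348 — 4 statements merged into one kernel-verified Lean document; each statement's English description precedes it below -/
import Mathlib

section
/- Any finite set χ = {x_1, …, x_d} ⊂ ℝ containing at least one nonzero element admits a q-canonical prepartition, where q = dim_ℚ(span_ℚ(χ)) is the dimension of the rational span of χ viewed as a vector space over the field ℚ. -/
open scoped BigOperators
open Filter

noncomputable section

/-- Shannon entropy (natural logarithm) of a discrete mass function `f`. -/
def shannonEntropy {α : Type*} (f : α → ℝ) : ℝ := ∑' t, Real.negMulLog (f t)

/-- `f` is a genuine probability mass function on `ℝ`. -/
structure IsPMF (f : ℝ → ℝ) : Prop where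
  nonneg : ∀ x, 0 ≤ f x
  summable : Summable f
  total : ∑' x, f x = 1

/-- Mass function of the sum `T_N = X_1 + ⋯ + X_N` of `N` iid copies of a discrete
real random variable with mass function `f` (for `N = 0` the sum is the constant `0`). -/
def sumMass (f : ℝ → ℝ) : ℕ → ℝ → ℝ
  | 0, t => if t = 0 then 1 else 0
  | (N + 1), t => ∑' x : ℝ, f x * sumMass f N (t - x)

/-- Probability that a random variable with mass function `f` takes a value in `s`. -/
def probOf (f : ℝ → ℝ) (s : Set ℝ) : ℝ := ∑' x : s, f (x : ℝ)

/-- Conditional mass function of `f` given that the value lies in `s`. -/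
def condMass (f : ℝ → ℝ) (s : Set ℝ) : ℝ → ℝ :=
  s.indicator fun x => f x / probOf f s

/-- Mean of a discrete real random variable with mass function `f`. -/
def pmfMean (f : ℝ → ℝ) : ℝ := ∑' x : ℝ, f x * x

/-- Variance of a discrete real random variable with mass function `f`. -/
def pmfVar (f : ℝ → ℝ) : ℝ := ∑' x : ℝ, f x * (x - pmfMean f) ^ 2

/-- Mass function of the multinomial random vector recording the outcome counts of
`N` independent trials with `d` outcomes of probabilities `p`. -/
def multinomialMass (d N : ℕ) (p : Fin d → ℝ) : (Fin d → ℕ) → ℝ := fun n =>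
  if (∑ j, n j) = N then
    ((N.factorial : ℝ) / ∏ j, ((n j).factorial : ℝ)) * ∏ j, p j ^ n j
  else 0

/-- `h` is a span of the set `s`, i.e. `s ⊆ {h n + a : n ∈ ℤ}` for some `a`. -/
def IsSpanOf (s : Set ℝ) (h : ℝ) : Prop :=
  ∃ a : ℝ, s ⊆ {x : ℝ | ∃ n : ℤ, x = h * n + a}

/-- A lattice set: a subset of `{h n + a : n ∈ ℤ}` for some `h, a ∈ ℝ`. -/
def IsLatticeSet (s : Set ℝ) : Prop := ∃ h : ℝ, IsSpanOf s h

/-- `h` is the maximal span of `s`: the largest positive `h` with `s ⊆ {h n + a : n ∈ ℤ}`. -/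
def IsMaxSpan (s : Set ℝ) (h : ℝ) : Prop :=
  0 < h ∧ IsSpanOf s h ∧ ∀ h' : ℝ, 0 < h' → IsSpanOf s h' → h' ≤ h

/-- `S_m(s)`: the set of all sums of `m` not-necessarily-distinct elements of `s`. -/
def sumsOf (s : Set ℝ) (m : ℕ) : Set ℝ :=
  {t : ℝ | ∃ g : Fin m → ℝ, (∀ i, g i ∈ s) ∧ t = ∑ i, g i}

/-- A finite collection of sets of reals is incommensurable if each set is nonempty and
not `{0}`, and any total `∑_j y_j` with `y_j ∈ S_{m_j}(χ_j)` and fixed total number of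
summands `N = ∑_j m_j` determines the `y_j` uniquely. -/
def Incommensurable {α : Type*} [Fintype α] (χ : α → Set ℝ) : Prop :=
  (∀ j, (χ j).Nonempty ∧ χ j ≠ {0}) ∧
  ∀ (N : ℕ) (m n : α → ℕ), (∑ j, m j) = N → (∑ j, n j) = N →
    ∀ y y' : α → ℝ, (∀ j, y j ∈ sumsOf (χ j) (m j)) → (∀ j, y' j ∈ sumsOf (χ j) (n j)) →
      (∑ j, y j) = (∑ j, y' j) → ∀ j, y j = y' j

/-- A `k`-canonical prepartition of `χ`: pairwise disjoint nonempty lattice subsets of `χ`,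
none equal to `{0}`, forming an incommensurable collection. -/
def IsCanonicalPrepartition {k : ℕ} (χ : Set ℝ) (π : Fin k → Set ℝ) : Prop :=
  (∀ j, π j ⊆ χ) ∧ (∀ j, IsLatticeSet (π j)) ∧
  (∀ i j : Fin k, i ≠ j → Disjoint (π i) (π j)) ∧ Incommensurable π

/-- A collection is degenerate if all its members are singletons. -/
def IsDegenerate {k : ℕ} (π : Fin k → Set ℝ) : Prop := ∀ j, ∃ x : ℝ, π j = {x}

/-- The incommensurability rank of a set `χ ⊂ ℝ`: the maximal `r` such that `χ` admits a
non-degenerate `r`-canonical prepartition (`0` if there is none). -/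
def incommRank (χ : Set ℝ) : ℕ :=
  sSup {r : ℕ | ∃ π : Fin r → Set ℝ, IsCanonicalPrepartition χ π ∧ ¬ IsDegenerate π}

end

/-!
Choose a `ℚ`-basis `c_1, …, c_q` of `span_ℚ χ` among the elements of `χ` and take the singletons
`{c_j}`. A sum with `m_j` summands from `{c_j}` is `∑ m_j c_j`, and since the `c_j` are linearly
independent over `ℚ`, hence over `ℕ`, such a sum determines every `m_j`.
-/

lemma sumsOf_singleton (x : ℝ) (m : ℕ) : sumsOf {x} m = {(m : ℝ) * x} := by
  ext t
  constructor
  · rintro ⟨g, hg, rfl⟩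
    simp [Set.mem_singleton_iff.mp (hg _)]
  · rintro rfl
    exact ⟨fun _ => x, fun _ => rfl, by simp⟩

lemma isLatticeSet_singleton (x : ℝ) : IsLatticeSet {x} :=
  ⟨1, x, fun y hy => ⟨0, by simpa using hy⟩⟩

lemma incommensurable_singleton_of_linearIndependent {ι : Type*} [Fintype ι] {c : ι → ℝ}
    (hc : LinearIndependent ℚ c) : Incommensurable fun j => ({c j} : Set ℝ) := by
  refine ⟨fun j => ⟨Set.singleton_nonempty _, by simpa using hc.ne_zero j⟩, ?_⟩
  intro N m n _ _ y y' hy hy' hsum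
  simp only [sumsOf_singleton, Set.mem_singleton_iff] at hy hy'
  have hmn : m = n := by
    refine funext (Fintype.linearIndependent_iffₛ.mp (hc.restrict_scalars' ℕ) m n ?_)
    simpa only [nsmul_eq_mul, ← hy, ← hy'] using hsum
  simp [hy, hy', hmn]

lemma isCanonicalPrepartition_singleton_of_linearIndependent {k : ℕ} {χ : Set ℝ}
    {c : Fin k → ℝ} (hc : LinearIndependent ℚ c) (hcχ : ∀ j, c j ∈ χ) :
    IsCanonicalPrepartition χ fun j => {c j} :=
  ⟨fun j => Set.singleton_subset_iff.mpr (hcχ j), fun j => isLatticeSet_singleton (c j),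
    fun _ _ hij => Set.disjoint_singleton.mpr (hc.injective.ne hij),
    incommensurable_singleton_of_linearIndependent hc⟩

lemma exists_linearIndependent_fin_finrank_span {K V : Type*} [DivisionRing K] [AddCommGroup V]
    [Module K V] {s : Set V} (hs : s.Finite) :
    ∃ c : Fin (Module.finrank K (Submodule.span K s)) → V,
      LinearIndependent K c ∧ ∀ j, c j ∈ s := by
  obtain ⟨b, hbs, hspan, hb⟩ := exists_linearIndependent K s
  have : Fintype b := (hs.subset hbs).fintype
  have hcard : Fintype.card b = Module.finrank K (Submodule.span K s) := by
    rw [← hspan, finrank_span_set_eq_card hb, Set.toFinset_card]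
  let e := (Fintype.equivFinOfCardEq hcard).symm
  exact ⟨fun j => e j, hb.comp e e.injective, fun j => hbs (e j).2⟩

theorem exists_canonical_prepartition_rank_span_general (χ : Set ℝ) (hfin : χ.Finite) :
    ∃ π : Fin (Module.finrank ℚ ↥(Submodule.span ℚ χ)) → Set ℝ,
      IsCanonicalPrepartition χ π := by
  obtain ⟨c, hc, hcχ⟩ := exists_linearIndependent_fin_finrank_span (K := ℚ) hfin
  exact ⟨_, isCanonicalPrepartition_singleton_of_linearIndependent hc hcχ⟩

/-- Lemma 5. Any finite set `χ ⊂ ℝ` containing a nonzero element admits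
a `q`-canonical prepartition, where `q = dim_ℚ span_ℚ(χ)`. -/
theorem exists_canonical_prepartition_rank_span (χ : Set ℝ) (hfin : χ.Finite)
    (hnz : ∃ x ∈ χ, x ≠ 0) :
    ∃ π : Fin (Module.finrank ℚ ↥(Submodule.span ℚ χ)) → Set ℝ,
      IsCanonicalPrepartition χ π :=
  exists_canonical_prepartition_rank_span_general χ hfin
end

section
/- Let {χ_1, …, χ_k} be an incommensurable collection of pairwise disjoint sets of real numbers and let i ≠ i' be two indices in {1, …, k}. Then the collection obtained by merging χ_i and χ_{i'} into their union, i.e. ({χ_1, …, χ_k} \ {χ_i, χ_{i'}}) ∪ {χ_i ∪ χ_{i'}}, is also incommensurable. -/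
open scoped BigOperators
open Filter

/-!
Sorting the summands of an element of `S_m(χ_i ∪ χ_{i'})` according to whether they lie in `χ_i`
writes it as `u + v` with `u ∈ S_a(χ_i)`, `v ∈ S_b(χ_{i'})` and `a + b = m`. Splitting the merged
entries of two representations this way gives two representations for the original collection,
with the same total and the same number of summands; incommensurability of the original
collection then identifies the pieces, and hence the merged entries.
-/

lemma sum_mem_sumsOf {ι : Type*} [Fintype ι] {s : Set ℝ} {g : ι → ℝ} (hg : ∀ i, g i ∈ s) :
    ∑ i, g i ∈ sumsOf s (Fintype.card ι) :=
  ⟨g ∘ (Fintype.equivFin ι).symm, fun _ => hg _, ((Fintype.equivFin ι).symm.sum_comp g).symm⟩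

lemma Finset.sum_mem_sumsOf {ι : Type*} (S : Finset ι) {s : Set ℝ} {g : ι → ℝ}
    (hg : ∀ i ∈ S, g i ∈ s) : ∑ i ∈ S, g i ∈ sumsOf s S.card := by
  simpa only [Finset.sum_coe_sort, Fintype.card_coe] using
    _root_.sum_mem_sumsOf (g := fun i : S => g i) fun i => hg i i.2

lemma exists_add_of_mem_sumsOf_union {s t : Set ℝ} {m : ℕ} {y : ℝ}
    (hy : y ∈ sumsOf (s ∪ t) m) :
    ∃ a b u v, a + b = m ∧ u ∈ sumsOf s a ∧ v ∈ sumsOf t b ∧ y = u + v := by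
  classical
  obtain ⟨g, hg, rfl⟩ := hy
  refine ⟨_, _, _, _, ?_,
    Finset.sum_mem_sumsOf _ fun i hi => (Finset.mem_filter.1 hi).2,
    Finset.sum_mem_sumsOf _ fun i hi => (hg i).resolve_left (Finset.mem_filter.1 hi).2,
    (Finset.sum_filter_add_sum_filter_not _ _ _).symm⟩
  rw [Finset.card_filter_add_card_filter_not, Finset.card_univ, Fintype.card_fin]

lemma Set.Nonempty.union_ne_singleton {β : Type*} {s t : Set β} {x : β} (hs : s.Nonempty)
    (hsx : s ≠ {x}) : s ∪ t ≠ {x} := fun h =>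
  hsx <| (Set.subset_singleton_iff_eq.1 (h ▸ Set.subset_union_left)).resolve_left
    hs.ne_empty

section Unmerge

variable {α M : Type*} [DecidableEq α] {i i' : α} (hne : i ≠ i')

def unmerge (f : {j // j ≠ i'} → M) (x x' : M) : α → M := fun j =>
  if h : j = i' then x' else Function.update f ⟨i, hne⟩ x ⟨j, h⟩

variable {hne}

@[simp]
lemma unmerge_right (f : {j // j ≠ i'} → M) (x x' : M) : unmerge hne f x x' i' = x' :=
  dif_pos rfl

@[simp]
lemma unmerge_left (f : {j // j ≠ i'} → M) (x x' : M) : unmerge hne f x x' i = x :=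
  (dif_neg hne).trans (Function.update_self _ _ _)

lemma unmerge_coe (f : {j // j ≠ i'} → M) (x x' : M) (j : {j // j ≠ i'}) :
    unmerge hne f x x' j = Function.update f ⟨i, hne⟩ x j :=
  dif_neg j.2

lemma unmerge_of_ne (f : {j // j ≠ i'} → M) (x x' : M) {j : α} (hj' : j ≠ i') (hj : j ≠ i) :
    unmerge hne f x x' j = f ⟨j, hj'⟩ :=
  (unmerge_coe f x x' ⟨j, hj'⟩).trans <|
    Function.update_of_ne (fun h => hj (congrArg Subtype.val h)) _ _

lemma sum_unmerge [Fintype α] [AddCommMonoid M] {f : {j // j ≠ i'} → M} {x x' : M}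
    (hf : f ⟨i, hne⟩ = x + x') : ∑ j, unmerge hne f x x' j = ∑ j, f j := by
  have hmem := Finset.mem_univ (⟨i, hne⟩ : {j // j ≠ i'})
  rw [Fintype.sum_eq_add_sum_subtype_ne _ i', unmerge_right,
    Finset.sum_eq_add_sum_sdiff_singleton_of_mem hmem f, hf]
  simp only [unmerge_coe, Finset.sum_update_of_mem hmem]
  ac_rfl

lemma eq_of_unmerge_eq [Add M] {f g : {j // j ≠ i'} → M} {x x' z z' : M}
    (hf : f ⟨i, hne⟩ = x + x') (hg : g ⟨i, hne⟩ = z + z')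
    (h : unmerge hne f x x' = unmerge hne g z z') : f = g := by
  funext j
  by_cases hj : (j : α) = i
  · obtain rfl : j = ⟨i, hne⟩ := Subtype.ext hj
    have hleft := congrFun h i
    have hright := congrFun h i'
    simp only [unmerge_left, unmerge_right] at hleft hright
    rw [hf, hg, hleft, hright]
  · simpa only [unmerge_of_ne _ _ _ j.2 hj] using congrFun h j

end Unmerge

section Merge

variable {α : Type*} [DecidableEq α]

def mergeAt (χ : α → Set ℝ) (i i' : α) : {j // j ≠ i'} → Set ℝ := fun j =>
  if (j : α) = i then χ i ∪ χ i' else χ j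

lemma mergeAt_self (χ : α → Set ℝ) {i i' : α} (hne : i ≠ i') :
    mergeAt χ i i' ⟨i, hne⟩ = χ i ∪ χ i' :=
  if_pos rfl

lemma mergeAt_of_ne (χ : α → Set ℝ) {i i' : α} {j : {j // j ≠ i'}} (hj : (j : α) ≠ i) :
    mergeAt χ i i' j = χ j :=
  if_neg hj

lemma exists_unmerge_mem_sumsOf_of_mem_sumsOf_mergeAt {χ : α → Set ℝ} {i i' : α}
    (hne : i ≠ i') {m : {j // j ≠ i'} → ℕ} {y : {j // j ≠ i'} → ℝ}
    (hy : ∀ j, y j ∈ sumsOf (mergeAt χ i i' j) (m j)) :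
    ∃ a b u v, m ⟨i, hne⟩ = a + b ∧ y ⟨i, hne⟩ = u + v ∧
      ∀ j, unmerge hne y u v j ∈ sumsOf (χ j) (unmerge hne m a b j) := by
  obtain ⟨a, b, u, v, hab, hu, hv, huv⟩ :=
    exists_add_of_mem_sumsOf_union (mergeAt_self χ hne ▸ hy ⟨i, hne⟩)
  refine ⟨a, b, u, v, hab.symm, huv, fun j => ?_⟩
  by_cases hj' : j = i'
  · subst hj'
    simpa only [unmerge_right] using hv
  by_cases hj : j = i
  · subst hj
    simpa only [unmerge_left] using hu
  rw [unmerge_of_ne _ _ _ hj' hj, unmerge_of_ne _ _ _ hj' hj]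
  exact mergeAt_of_ne χ (j := ⟨j, hj'⟩) hj ▸ hy ⟨j, hj'⟩

theorem Incommensurable.mergeAt [Fintype α] {χ : α → Set ℝ} (hinc : Incommensurable χ)
    {i i' : α} (hne : i ≠ i') : Incommensurable (mergeAt χ i i') := by
  refine ⟨fun j => ?_, fun N m n hm hn y y' hy hy' hsum => ?_⟩
  · by_cases hj : (j : α) = i
    · obtain ⟨hχ, hχ0⟩ := hinc.1 i
      rw [show j = ⟨i, hne⟩ from Subtype.ext hj, mergeAt_self]
      exact ⟨hχ.mono Set.subset_union_left, hχ.union_ne_singleton hχ0⟩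
    · exact mergeAt_of_ne χ hj ▸ hinc.1 j
  obtain ⟨a, b, u, v, hab, huv, hY⟩ := exists_unmerge_mem_sumsOf_of_mem_sumsOf_mergeAt hne hy
  obtain ⟨a', b', u', v', hab', huv', hY'⟩ :=
    exists_unmerge_mem_sumsOf_of_mem_sumsOf_mergeAt hne hy'
  have hYY' := hinc.2 N _ _ ((sum_unmerge hab).trans hm) ((sum_unmerge hab').trans hn) _ _
    hY hY' (by rwa [sum_unmerge huv, sum_unmerge huv'])
  exact congrFun (eq_of_unmerge_eq huv huv' (funext hYY'))

end Merge

theorem incommensurable_merge_general (k : ℕ) (χ : Fin k → Set ℝ)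
    (hinc : Incommensurable χ) (i i' : Fin k) (hne : i ≠ i') :
    Incommensurable (fun j : {j : Fin k // j ≠ i'} =>
      if (j : Fin k) = i then χ i ∪ χ i' else χ (j : Fin k)) :=
  hinc.mergeAt hne

/-- Lemma 11, point 3. Merging two sets of an incommensurable
collection of pairwise disjoint sets of reals into their union yields an incommensurable
collection. -/
theorem incommensurable_merge (k : ℕ) (χ : Fin k → Set ℝ)
    (hdisj : ∀ i j : Fin k, i ≠ j → Disjoint (χ i) (χ j))
    (hinc : Incommensurable χ) (i i' : Fin k) (hne : i ≠ i') :
    Incommensurable (fun j : {j : Fin k // j ≠ i'} =>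
      if (j : Fin k) = i then χ i ∪ χ i' else χ (j : Fin k)) :=
  incommensurable_merge_general k χ hinc i i' hne
end

section
/- If χ ⊂ ℝ is a lattice set with |χ| ≥ 2, then its incommensurability rank equals 1: r(χ) = 1. In particular, no translate of χ admits a non-degenerate k-canonical prepartition with k ≥ 2. -/
open scoped BigOperators
open Filter

/-! Two points `x ≠ x'` of one part and a point `z` of another part of a common lattice satisfy
`t (z - x) = e (x' - x)` with `t ≥ 1`, `e ∈ ℤ`. Moving the negative terms to the other side turns this
into two ways of writing the same total with the same number of summands, which differ by `t z`
in the second part; incommensurability forces `t z = 0`, i.e. `z = 0`. So on a lattice only one part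
can have two points, and when there are at least two parts none can. -/

theorem IsLatticeSet.image_add_const {s : Set ℝ} (hs : IsLatticeSet s) (a : ℝ) :
    IsLatticeSet ((fun x => x + a) '' s) := by
  obtain ⟨h, b, hsub⟩ := hs
  refine ⟨h, b + a, ?_⟩
  rintro _ ⟨x, hx, rfl⟩
  obtain ⟨n, rfl⟩ := hsub hx
  exact ⟨n, by ring⟩

theorem nsmul_mem_sumsOf {s : Set ℝ} {u : ℝ} (hu : u ∈ s) (n : ℕ) : (n : ℝ) * u ∈ sumsOf s n :=
  ⟨fun _ => u, fun _ => hu, by simp⟩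

theorem add_mem_sumsOf_add {s : Set ℝ} {m n : ℕ} {y y' : ℝ} (hy : y ∈ sumsOf s m)
    (hy' : y' ∈ sumsOf s n) : y + y' ∈ sumsOf s (m + n) := by
  obtain ⟨g, hg, rfl⟩ := hy
  obtain ⟨g', hg', rfl⟩ := hy'
  refine ⟨Fin.append g g', fun i => ?_, by rw [Fin.sum_univ_add]; simp⟩
  exact Fin.addCases (fun i => by simpa using hg i) (fun i => by simpa using hg' i) i

theorem zero_mem_sumsOf_zero (s : Set ℝ) : (0 : ℝ) ∈ sumsOf s 0 :=
  ⟨Fin.elim0, fun i => i.elim0, by simp⟩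

theorem Incommensurable.eq_of_add_eq {ι : Type*} [Fintype ι] {π : ι → Set ℝ}
    (hπ : Incommensurable π) {i j : ι} (hij : i ≠ j) {m n : ℕ} {y w y' : ℝ}
    (hy : y ∈ sumsOf (π i) m) (hw : w ∈ sumsOf (π j) n) (hy' : y' ∈ sumsOf (π i) (m + n))
    (hsum : y + w = y') : y = y' := by
  classical
  have hzero : ∀ l, 0 ∈ sumsOf (π l) 0 := fun l => zero_mem_sumsOf_zero _
  have hcounts : ∑ l, (Pi.single i m + Pi.single j n : ι → ℕ) l = m + n := by
    simp [Finset.sum_add_distrib]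
  have hleft : ∀ l, (Pi.single i y + Pi.single j w : ι → ℝ) l ∈
      sumsOf (π l) ((Pi.single i m + Pi.single j n : ι → ℕ) l) := by
    intro l
    rcases eq_or_ne l i with rfl | hli
    · simpa [hij] using hy
    rcases eq_or_ne l j with rfl | hlj
    · simpa [hli] using hw
    · simpa [hli, hlj] using hzero l
  have hright : ∀ l, (Pi.single i y' : ι → ℝ) l ∈
      sumsOf (π l) ((Pi.single i (m + n) : ι → ℕ) l) := by
    intro l
    rcases eq_or_ne l i with rfl | hli
    · simpa using hy'
    · simpa [hli] using hzero l
  have := hπ.2 (m + n) _ _ hcounts (by simp) _ _ hleft hright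
    (by simp [Finset.sum_add_distrib, hsum]) i
  simpa [hij] using this

theorem exists_balanced_sums_of_mul_sub_eq {x x' z : ℝ} {t : ℕ} {e : ℤ}
    (h : t * (z - x) = e * (x' - x)) :
    ∃ c b b' : ℕ, c + c + t = b + b' ∧ c * x + c * x' + t * z = b * x + b' * x' := by
  obtain ⟨c, hce, hec⟩ : ∃ c : ℕ, -(c : ℤ) ≤ e ∧ e ≤ c := ⟨e.natAbs, by omega, by omega⟩
  obtain ⟨b, hb⟩ := Int.eq_ofNat_of_zero_le (by omega : 0 ≤ c + t - e)
  obtain ⟨b', hb'⟩ := Int.eq_ofNat_of_zero_le (by omega : 0 ≤ c + e)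
  refine ⟨c, b, b', by omega, ?_⟩
  have hbR : (b : ℝ) = c + t - e := by exact_mod_cast hb.symm
  have hb'R : (b' : ℝ) = c + e := by exact_mod_cast hb'.symm
  rw [hbR, hb'R]
  linear_combination h

theorem Incommensurable.subsingleton_of_isSpanOf {ι : Type*} [Fintype ι] {π : ι → Set ℝ}
    (hπ : Incommensurable π) {i j : ι} (hij : i ≠ j) {h : ℝ} (hspan : IsSpanOf (π i ∪ π j) h) :
    (π i).Subsingleton := by
  intro x hx x' hx'
  by_contra hne
  obtain ⟨a, hsub⟩ := hspan
  obtain ⟨z, hz, hz0⟩ : ∃ z ∈ π j, z ≠ 0 := by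
    by_contra! hall
    exact (hπ.1 j).2 ((hπ.1 j).1.subset_singleton_iff.mp hall)
  obtain ⟨nx, rfl⟩ := hsub (Or.inl hx)
  obtain ⟨nx', rfl⟩ := hsub (Or.inl hx')
  obtain ⟨nz, rfl⟩ := hsub (Or.inr hz)
  have hd : nx' - nx ≠ 0 := fun hd => hne (by rw [sub_eq_zero.mp hd])
  -- squaring makes the coefficient of `z - x` in the lattice relation a positive natural number
  set t := (nx' - nx).natAbs ^ 2
  have ht : (t : ℝ) = ((nx' : ℝ) - nx) ^ 2 := by
    have : (t : ℤ) = (nx' - nx) ^ 2 := by simp [t]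
    exact_mod_cast this
  have hrel : t * ((h * nz + a) - (h * nx + a)) = (((nz - nx) * (nx' - nx) : ℤ) : ℝ) *
      ((h * nx' + a) - (h * nx + a)) := by
    push_cast; rw [ht]; ring
  obtain ⟨c, b, b', hcount, hsum⟩ := exists_balanced_sums_of_mul_sub_eq hrel
  have hsums_eq := hπ.eq_of_add_eq hij
    (add_mem_sumsOf_add (nsmul_mem_sumsOf hx c) (nsmul_mem_sumsOf hx' c))
    (nsmul_mem_sumsOf hz t)
    (hcount ▸ add_mem_sumsOf_add (nsmul_mem_sumsOf hx b) (nsmul_mem_sumsOf hx' b')) hsum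
  have ht0 : (t : ℝ) ≠ 0 := Nat.cast_ne_zero.mpr (pow_ne_zero 2 (Int.natAbs_ne_zero.mpr hd))
  exact hz0 ((mul_eq_zero.mp (by linarith : (t : ℝ) * (h * nz + a) = 0)).resolve_left ht0)

theorem IsLatticeSet.not_exists_nondegenerate_prepartition {s : Set ℝ} (hs : IsLatticeSet s)
    {k : ℕ} (hk : 2 ≤ k) :
    ¬ ∃ π : Fin k → Set ℝ, IsCanonicalPrepartition s π ∧ ¬ IsDegenerate π := by
  rintro ⟨π, ⟨hsub, -, -, hπ⟩, hnd⟩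
  obtain ⟨h, hspan⟩ := hs
  obtain ⟨i, hi⟩ : ∃ i, ¬ ∃ x, π i = {x} := by simpa [IsDegenerate] using hnd
  have : Nontrivial (Fin k) := Fin.nontrivial_iff_two_le.mpr hk
  obtain ⟨j, hji⟩ := exists_ne i
  obtain ⟨a, ha⟩ := hspan
  have hsingle := hπ.subsingleton_of_isSpanOf hji.symm
    ⟨a, (Set.union_subset (hsub i) (hsub j)).trans ha⟩
  exact hi ((hsingle.eq_empty_or_singleton).resolve_left (hπ.1 i).1.ne_empty)

theorem IsLatticeSet.isCanonicalPrepartition_const {s : Set ℝ} (hs : IsLatticeSet s)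
    (hnt : s.Nontrivial) :
    IsCanonicalPrepartition s (fun _ : Fin 1 => s) ∧ ¬ IsDegenerate (fun _ : Fin 1 => s) := by
  refine ⟨⟨fun _ => subset_rfl, fun _ => hs, fun i j hij => absurd (Subsingleton.elim i j) hij,
    fun _ => ⟨hnt.nonempty, hnt.ne_singleton⟩, ?_⟩, fun hdeg => ?_⟩
  · intro N m n _ _ y y' _ _ hsum j
    simpa [Fin.fin_one_eq_zero j] using hsum
  · obtain ⟨x, hx⟩ := hdeg 0
    exact hnt.ne_singleton hx

/-- Lemma 13, first direction. A lattice set `χ ⊂ ℝ` with at least two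
elements has incommensurability rank `1`; in particular, no translate of `χ` admits a
non-degenerate `k`-canonical prepartition with `k ≥ 2`. -/
theorem incommRank_of_lattice (χ : Set ℝ) (hlat : IsLatticeSet χ) (hnt : χ.Nontrivial) :
    incommRank χ = 1 ∧
    ∀ (a : ℝ) (k : ℕ), 2 ≤ k →
      ¬ ∃ π : Fin k → Set ℝ,
          IsCanonicalPrepartition ((fun x => x + a) '' χ) π ∧ ¬ IsDegenerate π := by
  refine ⟨?_, fun a k hk => (hlat.image_add_const a).not_exists_nondegenerate_prepartition hk⟩
  have hranks : {r : ℕ | ∃ π : Fin r → Set ℝ,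
      IsCanonicalPrepartition χ π ∧ ¬ IsDegenerate π} = {1} := by
    refine Set.eq_singleton_iff_unique_mem.mpr ⟨⟨_, hlat.isCanonicalPrepartition_const hnt⟩, ?_⟩
    rintro r ⟨π, hπ, hnd⟩
    obtain _ | _ | r := r
    · exact absurd (fun j => j.elim0) hnd
    · rfl
    · exact absurd ⟨π, hπ, hnd⟩ (hlat.not_exists_nondegenerate_prepartition (by omega))
  rw [incommRank, hranks, csSup_singleton]
end

section
/- If χ ⊂ ℝ is a finite set with |χ| ≥ 2 whose incommensurability rank satisfies r(χ) = 1 (equivalently, χ admits no non-degenerate k-canonical prepartition with k ≥ 2), then χ is a lattice set, i.e. there exist a, h ∈ ℝ such that χ ⊆ {h·n + a : n ∈ ℤ}. -/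
open scoped BigOperators
open Filter

noncomputable section

/-! If `χ` is not a lattice set, it contains points `x₀, x₁, x₂` with `x₁ - x₀` and `x₂ - x₀`
linearly independent over `ℤ`: otherwise every difference `x - x₀` is a rational multiple of
`x₁ - x₀`, and a common denominator of these finitely many ratios yields a lattice containing `χ`.
Then `{x₀, x₁}` and `{x₂}` form a non-degenerate `2`-canonical prepartition, because a coincidence
of two sums with the same number `N` of summands becomes, after subtracting `N x₀`, an integer
relation between `x₁ - x₀` and `x₂ - x₀`. Since a canonical prepartition of a finite set has at most `|χ|` blocks, this forces `r(χ) ≥ 2`. -/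

lemma eq_of_mem_sumsOf_singleton {c y : ℝ} {m : ℕ} (hy : y ∈ sumsOf {c} m) : y = m * c := by
  obtain ⟨g, hg, rfl⟩ := hy
  simp [show ∀ i, g i = c from hg, mul_comm]

lemma exists_of_mem_sumsOf_pair {a b y : ℝ} {m : ℕ} (hy : y ∈ sumsOf {a, b} m) :
    ∃ p ≤ m, y = m * a + p * (b - a) := by
  obtain ⟨g, hg, rfl⟩ := hy
  refine ⟨(Finset.univ.filter fun i => g i = b).card, (Finset.card_filter_le _ _).trans (by simp), ?_⟩
  have hterm : ∀ i, g i = a + if g i = b then b - a else 0 := fun i => by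
    rcases hg i with h | h <;> split_ifs <;> simp_all
  rw [Finset.sum_congr rfl fun i _ => hterm i, Finset.sum_add_distrib, Finset.sum_ite]
  simp only [Finset.sum_const, Finset.card_univ, Fintype.card_fin, nsmul_eq_mul]
  ring

lemma IsCanonicalPrepartition.le_ncard {χ : Set ℝ} (hfin : χ.Finite) {k : ℕ}
    {π : Fin k → Set ℝ} (hπ : IsCanonicalPrepartition χ π) : k ≤ χ.ncard := by
  choose x hx using fun j => (hπ.2.2.2.1 j).1
  have hinj : Set.InjOn x Set.univ := fun i _ j _ hij =>
    by_contra fun hne => Set.disjoint_left.mp (hπ.2.2.1 i j hne) (hx i) (hij ▸ hx j)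
  simpa using Set.ncard_le_ncard_of_injOn x (fun j _ => hπ.1 j (hx j)) hinj hfin

lemma le_incommRank {χ : Set ℝ} (hfin : χ.Finite) {k : ℕ} {π : Fin k → Set ℝ}
    (hπ : IsCanonicalPrepartition χ π) (hnd : ¬ IsDegenerate π) : k ≤ incommRank χ :=
  le_csSup ⟨χ.ncard, fun _ ⟨_, hπ', _⟩ => hπ'.le_ncard hfin⟩ ⟨π, hπ, hnd⟩

section PairSingleton

variable {a b c : ℝ}

lemma pair_ne_singleton (hab : a ≠ b) (x : ℝ) : ({a, b} : Set ℝ) ≠ {x} := fun h => by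
  have : ({a, b} : Set ℝ).Subsingleton := h ▸ Set.subsingleton_singleton
  exact hab (this (by simp) (by simp))

lemma LinearIndependent.eq_of_int_combination_eq {u v : ℝ} (h : LinearIndependent ℤ ![u, v])
    {s t s' t' : ℤ} (hst : (s : ℝ) * u + t * v = s' * u + t' * v) : s = s' ∧ t = t' := by
  have := LinearIndependent.pair_iff.mp h (s - s') (t - t') (by
    simp only [zsmul_eq_mul]; push_cast; linear_combination hst)
  omega

lemma distinct_of_linearIndependent_sub (h : LinearIndependent ℤ ![b - a, c - a]) :
    a ≠ b ∧ a ≠ c ∧ b ≠ c :=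
  ⟨fun h' => h.ne_zero 0 (by simp [h']), fun h' => h.ne_zero 1 (by simp [h']),
    fun h' => h.injective.ne (show (0 : Fin 2) ≠ 1 by decide) (by simp [h'])⟩

lemma incommensurable_pair_singleton (hind : LinearIndependent ℤ ![b - a, c - a]) (hc : c ≠ 0) :
    Incommensurable ![({a, b} : Set ℝ), {c}] := by
  have hab := (distinct_of_linearIndependent_sub hind).1
  refine ⟨fun j => ?_, fun N m n hm hn y y' hy hy' hsum => ?_⟩
  · fin_cases j
    · exact ⟨⟨a, by simp⟩, pair_ne_singleton hab 0⟩
    · simpa using hc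
  obtain ⟨p, -, hy₀⟩ := exists_of_mem_sumsOf_pair (hy 0)
  obtain ⟨q, -, hy'₀⟩ := exists_of_mem_sumsOf_pair (hy' 0)
  have hy₁ := eq_of_mem_sumsOf_singleton (hy 1)
  have hy'₁ := eq_of_mem_sumsOf_singleton (hy' 1)
  simp only [Fin.sum_univ_two] at hm hn hsum
  have hcount : (m 0 : ℝ) + m 1 = n 0 + n 1 := by exact_mod_cast hm.trans hn.symm
  have ⟨hpq, hmn⟩ := hind.eq_of_int_combination_eq (s := p) (t := m 1) (s' := q) (t' := n 1)
    (by push_cast; linear_combination hsum - a * hcount + hy'₀ - hy₀ + hy'₁ - hy₁)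
  have hm₀ : m 0 = n 0 := by omega
  intro j
  fin_cases j
  · simp [hy₀, hy'₀, hm₀, show p = q by omega]
  · simp [hy₁, hy'₁, show m 1 = n 1 by omega]

lemma isCanonicalPrepartition_pair_singleton {χ : Set ℝ} (ha : a ∈ χ) (hb : b ∈ χ) (hc : c ∈ χ)
    (hind : LinearIndependent ℤ ![b - a, c - a]) (hc₀ : c ≠ 0) :
    IsCanonicalPrepartition χ ![({a, b} : Set ℝ), {c}] := by
  obtain ⟨-, hac, hbc⟩ := distinct_of_linearIndependent_sub hind
  refine ⟨fun j => ?_, fun j => ?_, fun i j hij => ?_, incommensurable_pair_singleton hind hc₀⟩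
  · fin_cases j
    · simp [Set.insert_subset_iff, ha, hb]
    · simpa using hc
  · fin_cases j
    · exact ⟨b - a, a, by rintro x (rfl | rfl); exacts [⟨0, by simp⟩, ⟨1, by simp⟩]⟩
    · exact ⟨0, c, by simp⟩
  · fin_cases i <;> fin_cases j <;> simp_all [eq_comm]

lemma not_isDegenerate_pair_singleton (hab : a ≠ b) :
    ¬ IsDegenerate ![({a, b} : Set ℝ), {c}] := fun h =>
  (h 0).elim (pair_ne_singleton hab)

lemma two_le_incommRank {χ : Set ℝ} (hfin : χ.Finite) (ha : a ∈ χ) (hb : b ∈ χ) (hc : c ∈ χ)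
    (hind : LinearIndependent ℤ ![b - a, c - a]) (hc₀ : c ≠ 0) : 2 ≤ incommRank χ :=
  le_incommRank hfin (isCanonicalPrepartition_pair_singleton ha hb hc hind hc₀)
    (not_isDegenerate_pair_singleton (distinct_of_linearIndependent_sub hind).1)

end PairSingleton

lemma isLatticeSet_of_finite_of_forall_rat_mul {s : Set ℝ} (hs : s.Finite) (x₀ d : ℝ)
    (H : ∀ x ∈ s, ∃ q : ℚ, x - x₀ = q * d) : IsLatticeSet s := by
  choose! q hq using H
  set D : ℕ := ∏ x ∈ hs.toFinset, (q x).den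
  have hD : (D : ℝ) ≠ 0 := Nat.cast_ne_zero.mpr (Finset.prod_ne_zero_iff.mpr fun x _ => (q x).den_nz)
  refine ⟨d / D, x₀, fun x hx => ?_⟩
  obtain ⟨k, hk⟩ : (q x).den ∣ D := Finset.dvd_prod_of_mem _ (hs.mem_toFinset.mpr hx)
  refine ⟨(q x).num * k, ?_⟩
  have hnum : ((q x).num : ℝ) = q x * (q x).den := by exact_mod_cast (q x).mul_den_eq_num.symm
  have hD' : (D : ℝ) = (q x).den * k := by exact_mod_cast hk
  rw [Int.cast_mul, hnum, Int.cast_natCast, mul_assoc (q x : ℝ), ← hD']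
  field_simp
  linear_combination hq x hx

lemma exists_linearIndependent_of_not_isLatticeSet {s : Set ℝ} (hs : s.Finite)
    (hnl : ¬ IsLatticeSet s) {x₀ x₁ : ℝ} (hne : x₀ ≠ x₁) :
    ∃ x₂ ∈ s, LinearIndependent ℤ ![x₁ - x₀, x₂ - x₀] := by
  by_contra! hdep
  refine hnl (isLatticeSet_of_finite_of_forall_rat_mul hs x₀ (x₁ - x₀) fun x hx => ?_)
  obtain ⟨u, v, huv, hne0⟩ : ∃ u v : ℤ, (u : ℝ) * (x₁ - x₀) + v * (x - x₀) = 0 ∧ (u ≠ 0 ∨ v ≠ 0) := by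
    simpa [LinearIndependent.pair_iff, zsmul_eq_mul, or_iff_not_and_not] using hdep x hx
  have hv : (v : ℝ) ≠ 0 := by
    rintro hv
    have hu : (u : ℝ) = 0 := by simpa [hv, sub_eq_zero, hne.symm] using huv
    exact hne0.elim (· (by exact_mod_cast hu)) (· (by exact_mod_cast hv))
  exact ⟨-u / v, by push_cast; field_simp; linear_combination huv⟩

lemma Set.Subsingleton.isLatticeSet {s : Set ℝ} (hs : s.Subsingleton) : IsLatticeSet s := by
  rcases s.eq_empty_or_nonempty with rfl | ⟨a, ha⟩
  · exact ⟨0, 0, Set.empty_subset _⟩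
  · exact ⟨0, a, fun x hx => ⟨0, by simp [hs hx ha]⟩⟩

theorem lattice_of_incommRank_one_general (χ : Set ℝ) (hfin : χ.Finite)
    (hr : incommRank χ = 1) : IsLatticeSet χ := by
  by_contra hnl
  obtain ⟨x₀, hx₀, x₁, hx₁, hne⟩ : χ.Nontrivial :=
    Set.not_subsingleton_iff.mp (mt Set.Subsingleton.isLatticeSet hnl)
  obtain ⟨x₂, hx₂, hind⟩ := exists_linearIndependent_of_not_isLatticeSet hfin hnl hne
  have : 2 ≤ incommRank χ := by
    -- the singleton block of the prepartition must not be `{0}`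
    rcases eq_or_ne x₂ 0 with rfl | hx₂₀
    · exact two_le_incommRank hfin hx₀ hx₂ hx₁ (LinearIndependent.pair_symm_iff.mp hind)
        (distinct_of_linearIndependent_sub hind).2.2
    · exact two_le_incommRank hfin hx₀ hx₁ hx₂ hind hx₂₀
  omega

/-- Lemma 13, converse direction. A finite set `χ ⊂ ℝ` with at least two
elements and incommensurability rank `1` is a lattice set. -/
theorem lattice_of_incommRank_one (χ : Set ℝ) (hfin : χ.Finite) (hcard : 2 ≤ χ.ncard)
    (hr : incommRank χ = 1) : IsLatticeSet χ :=
  lattice_of_incommRank_one_general χ hfin hr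
end
end
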